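/- arXiv:2307.01788 — 2 statements merged into one kernel-verified Lean document; each statement's English description precedes it below -/
import Mathlib

section
/- Let (X, L) be an ω-topological space. There is a one-to-one correspondence between ω-continuous valuations ν on (X, L) and linear ω-continuous functionals F : 𝓛(X, L) → [0,∞], given by F(h) = ∫ h dν in one direction and ν(U) = F(χ_U) in the other. -/
open scoped ENNReal NNReal

variable {X : Type*}

/-- A lattice of subsets of `X`. -/
def IsLatt (L : Set (Set X)) : Prop :=
  ∅ ∈ L ∧ Set.univ ∈ L ∧ (∀ U ∈ L, ∀ V ∈ L, U ∪ V ∈ L) ∧ (∀ U ∈ L, ∀ V ∈ L, U ∩ V ∈ L)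

/-- An ω-topology: a lattice of subsets closed under countable unions. -/
def IsOmegaTop (L : Set (Set X)) : Prop :=
  IsLatt L ∧ ∀ U : ℕ → Set X, (∀ n, U n ∈ L) → (⋃ n, U n) ∈ L

/-- A valuation on `(X, L)`: strict, monotonic, modular. -/
def IsVal (L : Set (Set X)) (ν : Set X → ℝ≥0∞) : Prop :=
  ν ∅ = 0 ∧ (∀ U ∈ L, ∀ V ∈ L, U ⊆ V → ν U ≤ ν V) ∧
    (∀ U ∈ L, ∀ V ∈ L, ν U + ν V = ν (U ∪ V) + ν (U ∩ V))

/-- ω-continuity of a valuation: it preserves suprema of monotone sequences of sets. -/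
def IsOmegaContVal (L : Set (Set X)) (ν : Set X → ℝ≥0∞) : Prop :=
  ∀ U : ℕ → Set X, (∀ n, U n ∈ L) → Monotone U → ν (⋃ n, U n) = ⨆ n, ν (U n)

/-- `𝓛(X, L)`: maps `h : X → ℝ≥0∞` with `h⁻¹((t,∞]) ∈ L` for all `t ≥ 0`. -/
def MemL (L : Set (Set X)) (h : X → ℝ≥0∞) : Prop :=
  ∀ t : ℝ≥0, {x | (t : ℝ≥0∞) < h x} ∈ L

/-- The improper Riemann integral `∫₀^∞ f(t) dt` of an antitonic map `f : ℝ≥0 → ℝ≥0∞`,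
realized as a Lebesgue integral over `(0, ∞)`. -/
noncomputable def riem (f : ℝ≥0 → ℝ≥0∞) : ℝ≥0∞ :=
  ∫⁻ t in Set.Ioi (0 : ℝ), f t.toNNReal

/-- The Choquet integral `∫ h dν = ∫₀^∞ ν(h⁻¹((t,∞])) dt`. -/
noncomputable def choquet (ν : Set X → ℝ≥0∞) (h : X → ℝ≥0∞) : ℝ≥0∞ :=
  riem fun t => ν {x | (t : ℝ≥0∞) < h x}

/-- The characteristic map of `U`. -/
noncomputable def chi (U : Set X) : X → ℝ≥0∞ :=
  U.indicator fun _ => 1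

/-- `(g·μ)(U) := ∫ χ_U·g dμ`. -/
noncomputable def densMul (g : X → ℝ≥0∞) (μ : Set X → ℝ≥0∞) (U : Set X) : ℝ≥0∞ :=
  choquet μ fun x => chi U x * g x

/-- `(g·μ)(C) = ∫₀^∞ μ(C ∩ g⁻¹((t,∞])) dt`, the explicit formula for the density valuation. -/
noncomputable def densF (g : X → ℝ≥0∞) (μ : Set X → ℝ≥0∞) (C : Set X) : ℝ≥0∞ :=
  riem fun t => μ (C ∩ {x | (t : ℝ≥0∞) < g x})

/-- The smallest algebra of subsets of `X` containing `L`. -/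
def genAlg (L : Set (Set X)) : Set (Set X) :=
  {C | ∀ A : Set (Set X),
    (L ⊆ A ∧ ∅ ∈ A ∧ (∀ S ∈ A, Sᶜ ∈ A) ∧ (∀ S ∈ A, ∀ T ∈ A, S ∪ T ∈ A)) → C ∈ A}

/-- A crescent: a difference of two elements of `L`. -/
def IsCrescent (L : Set (Set X)) (C : Set X) : Prop :=
  ∃ U ∈ L, ∃ V ∈ L, C = U \ V

/-- A signed valuation: strict and modular, real-valued. -/
def IsSignedVal (L : Set (Set X)) (ς : Set X → ℝ) : Prop :=
  ς ∅ = 0 ∧ ∀ U ∈ L, ∀ V ∈ L, ς (U ∪ V) + ς (U ∩ V) = ς U + ς V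

/-- The Hahn decomposition property of a signed valuation `ς` on `(X, L)`: stated via any
signed valuation extending `ς` to the generated algebra (such an extension is unique). -/
def HasHahn (L : Set (Set X)) (ς : Set X → ℝ) : Prop :=
  ∀ ς' : Set X → ℝ, IsSignedVal (genAlg L) ς' → (∀ U ∈ L, ς' U = ς U) →
    ∃ U ∈ L, (∀ C, IsCrescent L C → C ⊆ U → 0 ≤ ς' C) ∧
      (∀ C, IsCrescent L C → Disjoint C U → ς' C ≤ 0)

/-- A linear, ω-continuous functional on `𝓛(X, L)`. -/
def IsLinOmegaFunc (L : Set (Set X)) (F : (X → ℝ≥0∞) → ℝ≥0∞) : Prop :=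
  (∀ a : ℝ≥0, ∀ h : X → ℝ≥0∞, MemL L h →
      F (fun x => (a : ℝ≥0∞) * h x) = (a : ℝ≥0∞) * F h) ∧
  (∀ h h' : X → ℝ≥0∞, MemL L h → MemL L h' →
      F (fun x => h x + h' x) = F h + F h') ∧
  (∀ h : ℕ → X → ℝ≥0∞, (∀ n, MemL L (h n)) → Monotone h →
      F (fun x => ⨆ n, h n x) = ⨆ n, F (h n))

/-!
The Choquet integral `∫ h dν` is ω-continuous by monotone convergence, and adding `c • χ_V` to
`h` adds `c * ν V`: integrate over `t` the modular law
`ν {h + c χ_V > t} + ν (V ∩ {h > t}) = ν (V ∩ {h > t - c}) + ν {h > t}` (with `ν V` in place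
of the first term on the right for `t < c`) and shift that term by `c`. Two ω-continuous
functionals with this property agree on the dyadic layer sums `∑_{k < n 2ⁿ} 2⁻ⁿ χ_{h > (k+1)/2ⁿ}`,
which increase to `h`, hence on all of `𝓛(X, L)`. This uniqueness principle gives the homogeneity
and additivity of the Choquet integral, and for a linear ω-continuous `F` the representation
`F h = ∫ h d(U ↦ F χ_U)`.
-/

open MeasureTheory Set

variable {L : Set (Set X)}

theorem IsOmegaTop.iUnion_mem {ι : Type*} [Countable ι] [Nonempty ι] (hL : IsOmegaTop L)
    {U : ι → Set X} (hU : ∀ i, U i ∈ L) : (⋃ i, U i) ∈ L := by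
  obtain ⟨e, he⟩ := exists_surjective_nat ι
  rw [← he.iUnion_comp]
  exact hL.2 _ fun n => hU (e n)

theorem chi_of_mem {U : Set X} {x : X} (hx : x ∈ U) : chi U x = 1 := indicator_of_mem hx _

theorem chi_of_notMem {U : Set X} {x : X} (hx : x ∉ U) : chi U x = 0 :=
  indicator_of_notMem hx _

theorem memL_zero (hL : IsLatt L) : MemL L (fun _ : X => (0 : ℝ≥0∞)) := by
  intro t
  simpa using hL.1

theorem memL_chi (hL : IsLatt L) {U : Set X} (hU : U ∈ L) : MemL L (chi U) := by
  intro t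
  by_cases ht : (t : ℝ≥0∞) < 1
  · convert hU using 1
    ext x
    by_cases hx : x ∈ U <;> simp [chi, hx, ht]
  · convert hL.1 using 1
    ext x
    by_cases hx : x ∈ U <;> simp_all [chi]

theorem memL_smul (hL : IsLatt L) {h : X → ℝ≥0∞} (hh : MemL L h) (a : ℝ≥0) :
    MemL L (fun x => (a : ℝ≥0∞) * h x) := by
  intro t
  rcases eq_or_ne a 0 with rfl | ha
  · simpa using hL.1
  · convert hh (t / a) using 1
    ext x
    rw [mem_ofPred_eq, mem_ofPred_eq, ENNReal.coe_div ha,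
      ENNReal.div_lt_iff (by simp [ha]) (by simp), mul_comm]

theorem memL_add (hL : IsOmegaTop L) {h h' : X → ℝ≥0∞} (hh : MemL L h) (hh' : MemL L h') :
    MemL L (fun x => h x + h' x) := by
  intro t
  have hsplit : {x | (t : ℝ≥0∞) < h x + h' x} = {x | (t : ℝ≥0∞) < h x} ∪
      ({x | (t : ℝ≥0∞) < h' x} ∪ ⋃ q : ℚ, {x | ((Real.toNNReal q : ℝ≥0) : ℝ≥0∞) < h x} ∩
        {x | ((t - Real.toNNReal q : ℝ≥0) : ℝ≥0∞) < h' x}) := by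
    ext x
    simp only [mem_ofPred_eq, mem_union, mem_iUnion, mem_inter_iff, ENNReal.coe_sub]
    constructor
    · intro hx
      refine (lt_or_ge (t : ℝ≥0∞) (h x)).imp id fun hle =>
        (lt_or_ge (t : ℝ≥0∞) (h' x)).imp id fun hle' => ?_
      obtain ⟨q, -, hq, hqh⟩ :=
        ENNReal.lt_iff_exists_rat_btwn.1 (ENNReal.sub_lt_of_lt_add hle' hx)
      refine ⟨q, hqh, ENNReal.sub_lt_of_lt_add (hqh.le.trans hle) ?_⟩
      rw [add_comm]
      exact ENNReal.lt_add_of_sub_lt_right (Or.inl ENNReal.coe_ne_top) hq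
    · rintro (hx | hx | ⟨q, hq, hq'⟩)
      · exact hx.trans_le le_self_add
      · exact hx.trans_le le_add_self
      · calc (t : ℝ≥0∞) ≤ Real.toNNReal q + (t - Real.toNNReal q) := le_add_tsub
          _ < h x + h' x := ENNReal.add_lt_add hq hq'
  rw [hsplit]
  exact hL.1.2.2.1 _ (hh t) _ (hL.1.2.2.1 _ (hh' t) _
    (hL.iUnion_mem fun q => hL.1.2.2.2 _ (hh _) _ (hh' _)))

theorem Antitone.measurable_riem_integrand {f : ℝ≥0 → ℝ≥0∞} (hf : Antitone f) :
    Measurable fun t : ℝ => f t.toNNReal :=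
  hf.measurable.comp measurable_real_toNNReal

theorem riem_mono {f g : ℝ≥0 → ℝ≥0∞} (hfg : f ≤ g) : riem f ≤ riem g :=
  lintegral_mono fun _ => hfg _

theorem riem_add {f g : ℝ≥0 → ℝ≥0∞} (hg : Antitone g) :
    riem (fun t => f t + g t) = riem f + riem g :=
  lintegral_add_right _ hg.measurable_riem_integrand

theorem riem_iSup {f : ℕ → ℝ≥0 → ℝ≥0∞} (hf : ∀ n, Antitone (f n)) (hmono : Monotone f) :
    riem (fun t => ⨆ n, f n t) = ⨆ n, riem (f n) :=
  lintegral_iSup (fun n => (hf n).measurable_riem_integrand) fun _ _ hmn _ => hmono hmn _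

theorem riem_shift (c : ℝ≥0) (a : ℝ≥0∞) (f : ℝ≥0 → ℝ≥0∞) :
    riem (fun t => if t < c then a else f (t - c)) = c * a + riem f := by
  set g : ℝ≥0 → ℝ≥0∞ := fun t => if t < c then a else f (t - c)
  have head : ∫⁻ t in Ioc 0 (c : ℝ), g t.toNNReal = c * a := by
    rw [← setLIntegral_congr Ioo_ae_eq_Ioc, setLIntegral_congr_fun measurableSet_Ioo
      (g := fun _ => a) fun t ht => if_pos ((Real.toNNReal_lt_iff_lt_coe ht.1.le).2 ht.2),
      setLIntegral_const, Real.volume_Ioo, sub_zero, ENNReal.ofReal_coe_nnreal, mul_comm]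
  have tail : ∫⁻ t in Ioi (c : ℝ), g t.toNNReal = riem f := by
    have hshift := (measurePreserving_add_right volume (c : ℝ)).setLIntegral_comp_emb
      (measurableEmbedding_addRight (c : ℝ)) (fun t => g t.toNNReal) (Ioi 0)
    rw [image_add_const_Ioi, zero_add] at hshift
    rw [← hshift, riem]
    refine setLIntegral_congr_fun measurableSet_Ioi fun t ht => ?_
    have ht : (0 : ℝ) ≤ t := le_of_lt ht
    simp only [g, Real.toNNReal_add ht c.coe_nonneg, Real.toNNReal_coe, add_tsub_cancel_right,
      not_lt.2 (le_add_self : c ≤ t.toNNReal + c), if_false]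
  rw [riem, ← Ioc_union_Ioi_eq_Ioi c.coe_nonneg, lintegral_union measurableSet_Ioi
    (Ioc_disjoint_Ioi le_rfl), head, tail]

theorem ENNReal.eq_of_add_right_eq_of_le {a b p : ℝ≥0∞} (h : a + p = b + p) (ha : p ≤ a)
    (hb : p ≤ b) : a = b := by
  rcases eq_or_ne p ∞ with rfl | hp
  · rw [top_le_iff.1 ha, top_le_iff.1 hb]
  · exact (ENNReal.add_left_inj hp).1 h

def IsChiAdditive (L : Set (Set X)) (ν : Set X → ℝ≥0∞) (Φ : (X → ℝ≥0∞) → ℝ≥0∞) : Prop :=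
  ∀ h, MemL L h → ∀ V ∈ L, ∀ c : ℝ≥0, Φ (fun x => h x + c * chi V x) = Φ h + c * ν V

def IsOmegaContFunc (L : Set (Set X)) (Φ : (X → ℝ≥0∞) → ℝ≥0∞) : Prop :=
  ∀ h : ℕ → X → ℝ≥0∞, (∀ n, MemL L (h n)) → Monotone h →
    Φ (fun x => ⨆ n, h n x) = ⨆ n, Φ (h n)

theorem antitone_levelSet (h : X → ℝ≥0∞) : Antitone fun t : ℝ≥0 => {x | (t : ℝ≥0∞) < h x} :=
  fun _ _ hst _ hx => (ENNReal.coe_le_coe.2 hst).trans_lt hx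

theorem levelSet_add_smul_chi (h : X → ℝ≥0∞) (V : Set X) (c t : ℝ≥0) :
    {x | (t : ℝ≥0∞) < h x + c * chi V x} =
      if t < c then V ∪ {x | (t : ℝ≥0∞) < h x}
      else V ∩ {x | ((t - c : ℝ≥0) : ℝ≥0∞) < h x} ∪ {x | (t : ℝ≥0∞) < h x} := by
  ext x
  by_cases hx : x ∈ V
  · split_ifs with htc
    · simp [chi, hx, (ENNReal.coe_lt_coe.2 htc).trans_le le_add_self]
    · simp only [chi, hx, indicator_of_mem, mul_one, mem_ofPred_eq, mem_union, mem_inter_iff,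
        true_and, ENNReal.coe_sub]
      rw [ENNReal.sub_lt_iff_lt_right ENNReal.coe_ne_top (ENNReal.coe_le_coe.2 (not_lt.1 htc))]
      exact ⟨Or.inl, fun h' => h'.elim id fun hlt => hlt.trans_le le_self_add⟩
  · split_ifs <;> simp [chi, hx]

theorem memL_add_smul_chi (hL : IsLatt L) {h : X → ℝ≥0∞} (hh : MemL L h) {V : Set X}
    (hV : V ∈ L) (c : ℝ≥0) : MemL L (fun x => h x + c * chi V x) := by
  intro t
  rw [levelSet_add_smul_chi]
  split_ifs
  · exact hL.2.2.1 _ hV _ (hh t)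
  · exact hL.2.2.1 _ (hL.2.2.2 _ hV _ (hh _)) _ (hh t)

section Choquet

variable {ν : Set X → ℝ≥0∞}

theorem antitone_measure_levelSet (hν : IsVal L ν) {h : X → ℝ≥0∞} (hh : MemL L h) :
    Antitone fun t : ℝ≥0 => ν {x | (t : ℝ≥0∞) < h x} :=
  fun _ _ hst => hν.2.1 _ (hh _) _ (hh _) (antitone_levelSet h hst)

theorem choquet_zero (hν : ν ∅ = 0) : choquet ν (fun _ => 0) = 0 := by
  simp [choquet, riem, hν]

theorem measure_levelSet_add_smul_chi (hL : IsLatt L) (hν : IsVal L ν) {h : X → ℝ≥0∞}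
    (hh : MemL L h) {V : Set X} (hV : V ∈ L) (c t : ℝ≥0) :
    ν {x | (t : ℝ≥0∞) < h x + c * chi V x} + ν (V ∩ {x | (t : ℝ≥0∞) < h x}) =
      (if t < c then ν V else ν (V ∩ {x | ((t - c : ℝ≥0) : ℝ≥0∞) < h x})) +
        ν {x | (t : ℝ≥0∞) < h x} := by
  rw [levelSet_add_smul_chi]
  split_ifs with htc
  · rw [hν.2.2 _ hV _ (hh t)]
  · have hinter : V ∩ {x | ((t - c : ℝ≥0) : ℝ≥0∞) < h x} ∩ {x | (t : ℝ≥0∞) < h x} =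
        V ∩ {x | (t : ℝ≥0∞) < h x} := by
      rw [inter_assoc, inter_eq_right.2 (antitone_levelSet h tsub_le_self)]
    rw [← hinter, hν.2.2 _ (hL.2.2.2 _ hV _ (hh _)) _ (hh t)]

theorem isChiAdditive_choquet (hL : IsLatt L) (hν : IsVal L ν) :
    IsChiAdditive L ν (choquet ν) := by
  intro h hh V hV c
  set P : ℝ≥0 → ℝ≥0∞ := fun t => ν (V ∩ {x | (t : ℝ≥0∞) < h x})
  have hR := antitone_measure_levelSet hν hh
  have hP : Antitone P := fun _ _ hst => hν.2.1 _ (hL.2.2.2 _ hV _ (hh _)) _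
    (hL.2.2.2 _ hV _ (hh _)) (inter_subset_inter_right V (antitone_levelSet h hst))
  have hPR : riem P ≤ choquet ν h :=
    riem_mono fun t => hν.2.1 _ (hL.2.2.2 _ hV _ (hh t)) _ (hh t) inter_subset_right
  have hRA : choquet ν h ≤ choquet ν (fun x => h x + c * chi V x) :=
    riem_mono fun t => hν.2.1 _ (hh t) _ (memL_add_smul_chi hL hh hV c t)
      fun x (hx : (t : ℝ≥0∞) < h x) => show (t : ℝ≥0∞) < h x + _ from hx.trans_le le_self_add
  have hsum : choquet ν (fun x => h x + c * chi V x) + riem P =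
      (choquet ν h + c * ν V) + riem P := by
    rw [choquet, ← riem_add hP, funext (measure_levelSet_add_smul_chi hL hν hh hV c),
      riem_add hR, riem_shift c (ν V) P, choquet]
    ring
  -- `riem P` may be infinite; it is cancelled using `riem P ≤ choquet ν h`.
  exact ENNReal.eq_of_add_right_eq_of_le hsum (hPR.trans hRA) (hPR.trans le_self_add)

theorem isOmegaContFunc_choquet (hν : IsVal L ν) (hc : IsOmegaContVal L ν) :
    IsOmegaContFunc L (choquet ν) := by
  intro h hh hmono
  have hlevel : ∀ t : ℝ≥0, ν {x | (t : ℝ≥0∞) < ⨆ n, h n x} = ⨆ n, ν {x | (t : ℝ≥0∞) < h n x} := by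
    intro t
    simp only [lt_iSup_iff, ofPred_exists]
    exact hc _ (fun n => hh n t) fun m n hmn x hx => hx.trans_le (hmono hmn x)
  rw [choquet, funext hlevel, riem_iSup (fun n => antitone_measure_levelSet hν (hh n))]
  · rfl
  · exact fun m n hmn t => hν.2.1 _ (hh m t) _ (hh n t) fun x hx => hx.trans_le (hmono hmn x)

theorem choquet_chi (hL : IsLatt L) (hν : IsVal L ν) {U : Set X} (hU : U ∈ L) :
    choquet ν (chi U) = ν U := by
  simpa [choquet_zero hν.1] using isChiAdditive_choquet hL hν _ (memL_zero hL) U hU 1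

end Choquet

noncomputable def layerSum (c : ℝ≥0) (U : ℕ → Set X) (m : ℕ) : X → ℝ≥0∞ :=
  fun x => ∑ k ∈ Finset.range m, (c : ℝ≥0∞) * chi (U k) x

theorem layerSum_zero (c : ℝ≥0) (U : ℕ → Set X) : layerSum c U 0 = fun _ => 0 := by
  funext x
  simp [layerSum]

theorem layerSum_succ (c : ℝ≥0) (U : ℕ → Set X) (m : ℕ) :
    layerSum c U (m + 1) = fun x => layerSum c U m x + c * chi (U m) x := by
  funext x
  simp [layerSum, Finset.sum_range_succ]

theorem memL_layerSum (hL : IsLatt L) {U : ℕ → Set X} (hU : ∀ k, U k ∈ L) (c : ℝ≥0) (m : ℕ) :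
    MemL L (layerSum c U m) := by
  induction m with
  | zero => rw [layerSum_zero]; exact memL_zero hL
  | succ m ih => rw [layerSum_succ]; exact memL_add_smul_chi hL ih (hU m) c

theorem IsChiAdditive.apply_layerSum {ν : Set X → ℝ≥0∞} {Φ : (X → ℝ≥0∞) → ℝ≥0∞}
    (hΦ : IsChiAdditive L ν Φ) (hL : IsLatt L) {U : ℕ → Set X} (hU : ∀ k, U k ∈ L)
    (c : ℝ≥0) (m : ℕ) :
    Φ (layerSum c U m) = Φ (fun _ => 0) + ∑ k ∈ Finset.range m, (c : ℝ≥0∞) * ν (U k) := by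
  induction m with
  | zero => simp [layerSum_zero]
  | succ m ih =>
    rw [layerSum_succ, hΦ _ (memL_layerSum hL hU c m) _ (hU m), ih, Finset.sum_range_succ,
      add_assoc]

noncomputable def dyadicLevel (n k : ℕ) : ℝ≥0 := (k + 1) / 2 ^ n

noncomputable def dyadicApprox (h : X → ℝ≥0∞) (n : ℕ) : X → ℝ≥0∞ :=
  layerSum (2 ^ n)⁻¹ (fun k => {x | (dyadicLevel n k : ℝ≥0∞) < h x}) (n * 2 ^ n)

theorem dyadicLevel_mono (n : ℕ) : Monotone (dyadicLevel n) := fun _ _ hkj => by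
  unfold dyadicLevel
  gcongr

theorem dyadicLevel_succ_two_mul_add_one (n k : ℕ) :
    dyadicLevel (n + 1) (2 * k + 1) = dyadicLevel n k := by
  unfold dyadicLevel
  rw [pow_succ, div_eq_div_iff (by positivity) (by positivity)]
  push_cast
  ring

theorem coe_dyadicLevel (n k : ℕ) :
    (dyadicLevel n k : ℝ≥0∞) = (k + 1) * ((2 ^ n)⁻¹ : ℝ≥0) := by
  rw [dyadicLevel, div_eq_mul_inv]
  push_cast
  rfl

theorem sum_range_two_mul {M : Type*} [AddCommMonoid M] (f : ℕ → M) (N : ℕ) :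
    ∑ j ∈ Finset.range (2 * N), f j = ∑ k ∈ Finset.range N, (f (2 * k) + f (2 * k + 1)) := by
  induction N with
  | zero => simp
  | succ N ih =>
    rw [Nat.mul_succ, Finset.sum_range_succ, Finset.sum_range_succ, ih, Finset.sum_range_succ,
      add_assoc]

theorem dyadicApprox_id_le_succ (n : ℕ) (a : ℝ≥0∞) :
    dyadicApprox id n a ≤ dyadicApprox id (n + 1) a := by
  set f : ℕ → ℝ≥0∞ := fun j =>
    ((2 ^ (n + 1))⁻¹ : ℝ≥0) * chi {b : ℝ≥0∞ | (dyadicLevel (n + 1) j : ℝ≥0∞) < b} a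
  -- Each dyadic interval of step `2⁻ⁿ` splits into two of step `2⁻⁽ⁿ⁺¹⁾`.
  have hsplit : ∀ k, ((2 ^ n)⁻¹ : ℝ≥0) * chi {b : ℝ≥0∞ | (dyadicLevel n k : ℝ≥0∞) < b} a ≤
      f (2 * k) + f (2 * k + 1) := by
    intro k
    by_cases hk : (dyadicLevel n k : ℝ≥0∞) < a
    · have hk' : (dyadicLevel (n + 1) (2 * k) : ℝ≥0∞) < a :=
        (ENNReal.coe_le_coe.2 ((dyadicLevel_mono _ (by omega)).trans
          (dyadicLevel_succ_two_mul_add_one n k).le)).trans_lt hk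
      simp only [f, chi, indicator_apply, mem_ofPred_eq, dyadicLevel_succ_two_mul_add_one, hk,
        hk', if_true, mul_one]
      rw [← ENNReal.coe_add, ← two_mul, pow_succ, mul_inv, mul_left_comm,
        mul_inv_cancel₀ two_ne_zero, mul_one]
    · simp [chi, hk]
  calc dyadicApprox id n a ≤ ∑ k ∈ Finset.range (n * 2 ^ n), (f (2 * k) + f (2 * k + 1)) :=
        Finset.sum_le_sum fun k _ => hsplit k
    _ = ∑ j ∈ Finset.range (2 * (n * 2 ^ n)), f j := (sum_range_two_mul f _).symm
    _ ≤ dyadicApprox id (n + 1) a := by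
        refine Finset.sum_le_sum_of_subset (Finset.range_subset_range.2 ?_)
        calc 2 * (n * 2 ^ n) = n * 2 ^ (n + 1) := by ring
          _ ≤ (n + 1) * 2 ^ (n + 1) := Nat.mul_le_mul_right _ n.le_succ

theorem dyadicApprox_id_le (n : ℕ) (a : ℝ≥0∞) : dyadicApprox id n a ≤ a := by
  set ε : ℝ≥0 := (2 ^ n)⁻¹
  suffices hpartial : ∀ m, layerSum ε (fun k => {b : ℝ≥0∞ | (dyadicLevel n k : ℝ≥0∞) < id b}) m a
      ≤ min a (m * ε) from (hpartial _).trans (min_le_left _ _)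
  intro m
  induction m with
  | zero => simp [layerSum_zero]
  | succ m ih =>
    simp only [layerSum_succ]
    by_cases hm : (dyadicLevel n m : ℝ≥0∞) < a
    · have hstep : layerSum ε (fun k => {b : ℝ≥0∞ | (dyadicLevel n k : ℝ≥0∞) < id b}) m a + ε ≤
          (m + 1 : ℕ) * ε := by
        push_cast
        rw [add_mul, one_mul]
        gcongr
        exact ih.trans (min_le_right _ _)
      rw [chi_of_mem (U := {b : ℝ≥0∞ | _ < id b}) hm, mul_one]
      refine le_min (hstep.trans ?_) hstep
      rw [Nat.cast_succ, ← coe_dyadicLevel]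
      exact hm.le
    · rw [chi_of_notMem (U := {b : ℝ≥0∞ | _ < id b}) hm, mul_zero, add_zero]
      exact ih.trans (min_le_min_left _ (by gcongr; simp))

theorem dyadicLevel_le_dyadicApprox_id {n k : ℕ} (hk : k < n * 2 ^ n) {a : ℝ≥0∞}
    (ha : (dyadicLevel n k : ℝ≥0∞) < a) : (dyadicLevel n k : ℝ≥0∞) ≤ dyadicApprox id n a := by
  have hterm : ∀ j ∈ Finset.range (k + 1), (((2 ^ n)⁻¹ : ℝ≥0) : ℝ≥0∞) ≤
      ((2 ^ n)⁻¹ : ℝ≥0) * chi {b : ℝ≥0∞ | (dyadicLevel n j : ℝ≥0∞) < id b} a := by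
    intro j hj
    rw [chi_of_mem (U := {b : ℝ≥0∞ | _ < id b}), mul_one]
    exact (ENNReal.coe_le_coe.2 (dyadicLevel_mono n (Finset.mem_range_succ_iff.1 hj))).trans_lt ha
  calc (dyadicLevel n k : ℝ≥0∞) = ∑ _j ∈ Finset.range (k + 1), (((2 ^ n)⁻¹ : ℝ≥0) : ℝ≥0∞) := by
        simp [coe_dyadicLevel]
    _ ≤ _ := Finset.sum_le_sum hterm
    _ ≤ dyadicApprox id n a := Finset.sum_le_sum_of_subset (Finset.range_subset_range.2 hk)

theorem exists_dyadicLevel_btwn {r : ℝ≥0} {a : ℝ≥0∞} (hr : (r : ℝ≥0∞) < a) :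
    ∃ n k, k < n * 2 ^ n ∧ r < dyadicLevel n k ∧ (dyadicLevel n k : ℝ≥0∞) < a := by
  obtain ⟨s, hrs, hsa⟩ := ENNReal.lt_iff_exists_nnreal_btwn.1 hr
  rw [ENNReal.coe_lt_coe] at hrs
  obtain ⟨n, hn⟩ := exists_nat_gt (max s (s - r)⁻¹)
  have hpow : (0 : ℝ≥0) < 2 ^ n := by positivity
  have hε : ((2 : ℝ≥0) ^ n)⁻¹ < s - r := inv_lt_of_inv_lt₀ (tsub_pos_of_lt hrs)
    ((le_max_right _ _).trans_lt (hn.trans (by exact_mod_cast n.lt_two_pow_self)))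
  set k := ⌊r * 2 ^ n⌋₊
  refine ⟨n, k, ?_, ?_, ?_⟩
  · refine (Nat.floor_lt zero_le).2 ?_
    push_cast
    exact mul_lt_mul_of_pos_right (hrs.trans ((le_max_left _ _).trans_lt hn)) hpow
  · rw [dyadicLevel, lt_div_iff₀ hpow]
    exact Nat.lt_floor_add_one _
  · refine (ENNReal.coe_lt_coe.2 ?_).trans hsa
    rw [dyadicLevel, add_div, div_eq_mul_inv 1, one_mul]
    calc (k : ℝ≥0) / 2 ^ n + (2 ^ n)⁻¹ ≤ r + (2 ^ n)⁻¹ := by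
          gcongr
          exact (div_le_iff₀ hpow).2 (Nat.floor_le zero_le)
      _ < s := by
          rw [← lt_tsub_iff_left]
          exact hε

theorem le_iSup_dyadicApprox_id (a : ℝ≥0∞) : a ≤ ⨆ n, dyadicApprox id n a :=
  ENNReal.le_of_forall_nnreal_lt fun r hr => by
    obtain ⟨n, k, hk, hrk, hka⟩ := exists_dyadicLevel_btwn hr
    exact (ENNReal.coe_le_coe.2 hrk.le).trans
      ((dyadicLevel_le_dyadicApprox_id hk hka).trans (le_iSup (fun n => dyadicApprox id n a) n))

-- `dyadicApprox h n x` is definitionally `dyadicApprox id n (h x)`.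
theorem monotone_dyadicApprox (h : X → ℝ≥0∞) : Monotone (dyadicApprox h) :=
  monotone_nat_of_le_succ fun n x => dyadicApprox_id_le_succ n (h x)

theorem iSup_dyadicApprox (h : X → ℝ≥0∞) : (fun x => ⨆ n, dyadicApprox h n x) = h :=
  funext fun x => le_antisymm (iSup_le fun n => dyadicApprox_id_le n (h x))
    (le_iSup_dyadicApprox_id (h x))

theorem memL_dyadicApprox (hL : IsLatt L) {h : X → ℝ≥0∞} (hh : MemL L h) (n : ℕ) :
    MemL L (dyadicApprox h n) :=
  memL_layerSum hL (fun _ => hh _) _ _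

theorem IsChiAdditive.eq {ν : Set X → ℝ≥0∞} {Φ Ψ : (X → ℝ≥0∞) → ℝ≥0∞} (hL : IsLatt L)
    (hΦ : IsChiAdditive L ν Φ) (hΨ : IsChiAdditive L ν Ψ) (hΦc : IsOmegaContFunc L Φ)
    (hΨc : IsOmegaContFunc L Ψ) (h0 : Φ (fun _ => 0) = Ψ (fun _ => 0)) {h : X → ℝ≥0∞}
    (hh : MemL L h) : Φ h = Ψ h := by
  have happrox : ∀ n, Φ (dyadicApprox h n) = Ψ (dyadicApprox h n) := fun n => by
    rw [dyadicApprox, hΦ.apply_layerSum hL (fun _ => hh _), hΨ.apply_layerSum hL (fun _ => hh _),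
      h0]
  rw [← iSup_dyadicApprox h, hΦc _ (memL_dyadicApprox hL hh) (monotone_dyadicApprox h),
    hΨc _ (memL_dyadicApprox hL hh) (monotone_dyadicApprox h)]
  exact iSup_congr happrox

section Choquet

variable {ν : Set X → ℝ≥0∞}

theorem choquet_smul (hL : IsLatt L) (hν : IsVal L ν) (hc : IsOmegaContVal L ν) (a : ℝ≥0)
    {h : X → ℝ≥0∞} (hh : MemL L h) :
    choquet ν (fun x => a * h x) = a * choquet ν h := by
  refine IsChiAdditive.eq (Φ := fun h => choquet ν fun x => a * h x)
    (Ψ := fun h => a * choquet ν h) (ν := fun V => a * ν V) hL ?_ ?_ ?_ ?_ ?_ hh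
  · intro h hh V hV c
    simp only [mul_add, ← mul_assoc, ← ENNReal.coe_mul]
    rw [isChiAdditive_choquet hL hν _ (memL_smul hL hh a) V hV, mul_comm a c]
  · intro h hh V hV c
    dsimp only
    rw [isChiAdditive_choquet hL hν h hh V hV, mul_add, mul_left_comm]
  · intro h hh hmono
    simp only [ENNReal.mul_iSup]
    exact isOmegaContFunc_choquet hν hc _ (fun n => memL_smul hL (hh n) a)
      fun m n hmn x => by gcongr; exact hmono hmn x
  · intro h hh hmono
    dsimp only
    rw [isOmegaContFunc_choquet hν hc h hh hmono, ENNReal.mul_iSup]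
  · simp [choquet_zero hν.1]

theorem choquet_add (hL : IsOmegaTop L) (hν : IsVal L ν) (hc : IsOmegaContVal L ν)
    {h h' : X → ℝ≥0∞} (hh : MemL L h) (hh' : MemL L h') :
    choquet ν (fun x => h x + h' x) = choquet ν h + choquet ν h' := by
  refine IsChiAdditive.eq (Φ := fun h' => choquet ν fun x => h x + h' x)
    (Ψ := fun h' => choquet ν h + choquet ν h') (ν := ν) hL.1 ?_ ?_ ?_ ?_ ?_ hh'
  · intro h' hh' V hV c
    simp only [← add_assoc]
    exact isChiAdditive_choquet hL.1 hν _ (memL_add hL hh hh') V hV c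
  · intro h' hh' V hV c
    dsimp only
    rw [isChiAdditive_choquet hL.1 hν h' hh' V hV, add_assoc]
  · intro h' hh' hmono
    simp only [ENNReal.add_iSup]
    exact isOmegaContFunc_choquet hν hc _ (fun n => memL_add hL hh (hh' n))
      fun m n hmn x => by gcongr; exact hmono hmn x
  · intro h' hh' hmono
    dsimp only
    rw [isOmegaContFunc_choquet hν hc h' hh' hmono, ENNReal.add_iSup]
  · simp [choquet_zero hν.1]

theorem isLinOmegaFunc_choquet (hL : IsOmegaTop L) (hν : IsVal L ν) (hc : IsOmegaContVal L ν) :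
    IsLinOmegaFunc L (choquet ν) :=
  ⟨fun a _ hh => choquet_smul hL.1 hν hc a hh, fun _ _ hh hh' => choquet_add hL hν hc hh hh',
    isOmegaContFunc_choquet hν hc⟩

end Choquet

namespace IsLinOmegaFunc

variable {F : (X → ℝ≥0∞) → ℝ≥0∞}

theorem map_zero (hL : IsLatt L) (hF : IsLinOmegaFunc L F) : F (fun _ => 0) = 0 := by
  simpa using hF.1 0 _ (memL_zero hL)

theorem mono (hF : IsLinOmegaFunc L F) {h h' : X → ℝ≥0∞} (hh : MemL L h) (hh' : MemL L h')
    (hle : h ≤ h') : F h ≤ F h' := by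
  -- Apply ω-continuity to the monotone sequence `h, h', h', …`.
  set g : ℕ → X → ℝ≥0∞ := fun n => if n = 0 then h else h'
  have hg : Monotone g := monotone_nat_of_le_succ fun n => by
    rcases n with _ | n <;> simp [g, hle]
  have hsup : (fun x => ⨆ n, g n x) = h' := funext fun x =>
    le_antisymm (iSup_le fun n => by rcases n with _ | n <;> simp [g, hle x])
      (le_iSup_of_le 1 le_rfl)
  calc F h = F (g 0) := rfl
    _ ≤ ⨆ n, F (g n) := le_iSup (fun n => F (g n)) 0
    _ = F h' := by
      rw [← hF.2.2 g (fun n => by rcases n with _ | n; exacts [hh, hh']) hg, hsup]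

theorem isChiAdditive (hL : IsLatt L) (hF : IsLinOmegaFunc L F) :
    IsChiAdditive L (fun U => F (chi U)) F := fun h hh V hV c => by
  rw [hF.2.1 _ _ hh (memL_smul hL (memL_chi hL hV) c), hF.1 c _ (memL_chi hL hV)]

theorem isVal (hL : IsLatt L) (hF : IsLinOmegaFunc L F) : IsVal L (fun U => F (chi U)) := by
  refine ⟨?_, fun U hU V hV hUV => hF.mono (memL_chi hL hU) (memL_chi hL hV) ?_, ?_⟩
  · simpa [chi] using hF.map_zero hL
  · exact indicator_le_indicator_of_subset hUV fun _ => zero_le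
  · intro U hU V hV
    rw [← hF.2.1 _ _ (memL_chi hL hU) (memL_chi hL hV),
      ← hF.2.1 _ _ (memL_chi hL (hL.2.2.1 _ hU _ hV)) (memL_chi hL (hL.2.2.2 _ hU _ hV))]
    simp only [chi, indicator_union_add_inter_apply]

theorem isOmegaContVal (hL : IsLatt L) (hF : IsLinOmegaFunc L F) :
    IsOmegaContVal L (fun U => F (chi U)) := by
  intro U hU hmono
  show F (chi (⋃ n, U n)) = ⨆ n, F (chi (U n))
  have hchi : chi (⋃ n, U n) = fun x => ⨆ n, chi (U n) x :=
    funext (indicator_iUnion_apply (M := ℝ≥0∞) rfl U _)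
  rw [hchi]
  exact hF.2.2 _ (fun n => memL_chi hL (hU n))
    fun m n hmn => indicator_le_indicator_of_subset (hmono hmn) fun _ => zero_le

theorem eq_choquet (hL : IsLatt L) (hF : IsLinOmegaFunc L F) {h : X → ℝ≥0∞} (hh : MemL L h) :
    F h = choquet (fun U => F (chi U)) h := by
  have hν := hF.isVal hL
  refine IsChiAdditive.eq hL (hF.isChiAdditive hL) (isChiAdditive_choquet hL hν) hF.2.2
    (isOmegaContFunc_choquet hν (hF.isOmegaContVal hL)) ?_ hh
  rw [hF.map_zero hL, choquet_zero hν.1]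

end IsLinOmegaFunc

/-- one-to-one correspondence between ω-continuous valuations and
linear ω-continuous functionals, via `F(h) = ∫ h dν` and `ν(U) = F(χ_U)`. -/
theorem stmt8 (L : Set (Set X)) (hL : IsOmegaTop L) :
    (∀ ν : Set X → ℝ≥0∞, IsVal L ν → IsOmegaContVal L ν →
        IsLinOmegaFunc L (choquet ν) ∧ ∀ U ∈ L, choquet ν (chi U) = ν U) ∧
      (∀ F : (X → ℝ≥0∞) → ℝ≥0∞, IsLinOmegaFunc L F →
        IsVal L (fun U => F (chi U)) ∧ IsOmegaContVal L (fun U => F (chi U)) ∧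
          ∀ h : X → ℝ≥0∞, MemL L h → F h = choquet (fun U => F (chi U)) h) :=
  ⟨fun _ hν hc => ⟨isLinOmegaFunc_choquet hL hν hc, fun _ hU => choquet_chi hL.1 hν hU⟩,
    fun _ hF => ⟨hF.isVal hL.1, hF.isOmegaContVal hL.1, fun _ hh => hF.eq_choquet hL.1 hh⟩⟩
end

section
/- Every bounded valuation ν on a Pervin space (X, L) extends to a unique valuation on (X, A(L)), where A(L) is the smallest algebra of subsets containing L. -/
open scoped ENNReal NNReal

variable {X : Type*}

/-!
Let `#s x` count the members of a finite family `s ⊆ L` that contain `x`. Modularity telescopes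
along the superlevel sets of `#s`, giving the layer-cake formula `∑_{U ∈ s} ν U = ∑_k ν {#s > k}`;
hence `∑_{U ∈ s} ν U` depends only on `#s`, monotonically. Every `C ∈ A(L)` satisfies
`𝟙_C + #t = #s` for some finite families `s, t ⊆ L` (such representations are closed under
complement and, multiplying counts, under intersection), and `ν' C := ∑_s ν - ∑_t ν` does not
depend on the representation. Modularity and monotonicity of `ν'` follow from
`𝟙_{C ∪ D} + 𝟙_{C ∩ D} = 𝟙_C + 𝟙_D` and `𝟙_C ≤ 𝟙_D`. Uniqueness is the layer-cake formula
again, for any valuation on the lattice `A(L)` and the family `C, t`.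
-/

section CoverCount

noncomputable def coverCount (s : Multiset (Set X)) : X → ℕ :=
  (s.map fun U => U.indicator 1).sum

@[simp] lemma coverCount_zero : coverCount (0 : Multiset (Set X)) = 0 := by
  simp [coverCount]

@[simp] lemma coverCount_cons (U : Set X) (s : Multiset (Set X)) :
    coverCount (U ::ₘ s) = U.indicator 1 + coverCount s := by
  simp [coverCount]

@[simp] lemma coverCount_add (s t : Multiset (Set X)) :
    coverCount (s + t) = coverCount s + coverCount t := by
  simp [coverCount]

lemma coverCount_le_card (s : Multiset (Set X)) (x : X) :
    coverCount s x ≤ Multiset.card s := by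
  induction s using Multiset.induction_on with
  | empty => simp
  | cons U s ih =>
    have hU : U.indicator (1 : X → ℕ) x ≤ 1 := Set.indicator_le_self' (fun _ _ => zero_le_one) x
    simp only [coverCount_cons, Pi.add_apply, Multiset.card_cons]
    omega

lemma coverCount_map_inter (U : Set X) (t : Multiset (Set X)) :
    coverCount (t.map (U ∩ ·)) = U.indicator 1 * coverCount t := by
  simp only [coverCount, Multiset.map_map, Function.comp_def, Set.inter_indicator_one]
  exact Multiset.sum_map_mul_left

noncomputable def interProd (s t : Multiset (Set X)) : Multiset (Set X) :=
  (s ×ˢ t).map fun p => p.1 ∩ p.2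

lemma coverCount_interProd (s t : Multiset (Set X)) :
    coverCount (interProd s t) = coverCount s * coverCount t := by
  induction s using Multiset.induction_on with
  | empty => simp [interProd]
  | cons U s ih =>
    rw [interProd, Multiset.cons_product, Multiset.map_add, coverCount_add, Multiset.map_map,
      ← interProd, ih, coverCount_cons, add_mul, ← coverCount_map_inter]
    rfl

lemma setOf_lt_indicator_add (U : Set X) (f : X → ℕ) (k : ℕ) :
    {x | k < U.indicator 1 x + f x} = {x | k < f x} ∪ ({x | k ≤ f x} ∩ U) := by
  ext x
  by_cases hx : x ∈ U <;> simp [hx]; omega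

end CoverCount

namespace IsLatt

variable {L : Set (Set X)} {s t : Multiset (Set X)}

lemma setOf_le_coverCount_mem (hL : IsLatt L) (hs : ∀ U ∈ s, U ∈ L) (k : ℕ) :
    {x | k ≤ coverCount s x} ∈ L := by
  induction s using Multiset.induction_on generalizing k with
  | empty => cases k <;> simp [hL.1, hL.2.1]
  | cons U s ih =>
    have hU : U ∈ L := hs U (Multiset.mem_cons_self U s)
    have hs' : ∀ V ∈ s, V ∈ L := fun V hV => hs V (Multiset.mem_cons_of_mem hV)
    cases k with
    | zero => simpa using hL.2.1
    | succ k =>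
      simp only [Nat.succ_le_iff, coverCount_cons, Pi.add_apply, setOf_lt_indicator_add]
      exact hL.2.2.1 _ (ih hs' (k + 1)) _ (hL.2.2.2 _ (ih hs' k) _ hU)

lemma interProd_mem (hL : IsLatt L) (hs : ∀ U ∈ s, U ∈ L) (ht : ∀ V ∈ t, V ∈ L) :
    ∀ W ∈ interProd s t, W ∈ L := by
  simp only [interProd, Multiset.mem_map, Multiset.mem_product]
  rintro _ ⟨⟨U, V⟩, ⟨hU, hV⟩, rfl⟩
  exact hL.2.2.2 U (hs U hU) V (ht V hV)

end IsLatt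

section LayerCake

open Finset

variable {L : Set (Set X)} {ν : Set X → ℝ≥0∞} {s t : Multiset (Set X)}

lemma sum_range_setOf_lt_indicator_add (hL : IsLatt L) (hν : IsVal L ν) {f : X → ℕ}
    (hf : ∀ k, {x | k ≤ f x} ∈ L) {U : Set X} (hU : U ∈ L) (n : ℕ) :
    ∑ k ∈ range n, ν {x | k < U.indicator 1 x + f x} + ν ({x | n ≤ f x} ∩ U) =
      ∑ k ∈ range n, ν {x | k < f x} + ν U := by
  induction n with
  | zero => simp
  | succ n ih =>
    have hmod : ν {x | n < f x} + ν ({x | n ≤ f x} ∩ U) =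
        ν ({x | n < f x} ∪ ({x | n ≤ f x} ∩ U)) + ν ({x | n < f x} ∩ ({x | n ≤ f x} ∩ U)) :=
      hν.2.2 _ (hf (n + 1)) _ (hL.2.2.2 _ (hf n) _ hU)
    have hinter : {x | n < f x} ∩ ({x | n ≤ f x} ∩ U) = {x | n + 1 ≤ f x} ∩ U :=
      Set.ext fun x => ⟨fun h => ⟨h.1, h.2.2⟩, fun h => ⟨h.1, Nat.le_of_succ_le h.1, h.2⟩⟩
    rw [← setOf_lt_indicator_add, hinter] at hmod
    calc ∑ k ∈ range (n + 1), ν {x | k < U.indicator 1 x + f x} + ν ({x | n + 1 ≤ f x} ∩ U)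
        = ∑ k ∈ range n, ν {x | k < U.indicator 1 x + f x} + ν ({x | n ≤ f x} ∩ U)
            + ν {x | n < f x} := by
          rw [sum_range_succ, add_assoc, ← hmod]; ring
      _ = ∑ k ∈ range (n + 1), ν {x | k < f x} + ν U := by
          rw [ih, sum_range_succ]; ring

lemma sum_map_eq_sum_range_setOf_lt (hL : IsLatt L) (hν : IsVal L ν) (hs : ∀ U ∈ s, U ∈ L)
    {N : ℕ} (hN : Multiset.card s ≤ N) :
    (s.map ν).sum = ∑ k ∈ range N, ν {x | k < coverCount s x} := by
  induction s using Multiset.induction_on with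
  | empty => simp [hν.1]
  | cons U s ih =>
    rw [Multiset.card_cons] at hN
    have hU : U ∈ L := hs U (Multiset.mem_cons_self U s)
    have hs' : ∀ V ∈ s, V ∈ L := fun V hV => hs V (Multiset.mem_cons_of_mem hV)
    have htop : {x | N ≤ coverCount s x} ∩ U = ∅ :=
      Set.eq_empty_of_forall_notMem fun x hx => by
        have := coverCount_le_card s x
        have : N ≤ coverCount s x := hx.1
        omega
    have hstep := sum_range_setOf_lt_indicator_add hL hν (hL.setOf_le_coverCount_mem hs') hU N
    rw [htop, hν.1, add_zero] at hstep
    simp only [Multiset.map_cons, Multiset.sum_cons, coverCount_cons, Pi.add_apply]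
    rw [hstep, ih hs' (by omega), add_comm]

lemma sum_map_mono_of_coverCount_le (hL : IsLatt L) (hν : IsVal L ν) (hs : ∀ U ∈ s, U ∈ L)
    (ht : ∀ U ∈ t, U ∈ L) (hst : coverCount s ≤ coverCount t) :
    (s.map ν).sum ≤ (t.map ν).sum := by
  rw [sum_map_eq_sum_range_setOf_lt hL hν hs (Nat.le_add_right _ (Multiset.card t)),
    sum_map_eq_sum_range_setOf_lt hL hν ht (Nat.le_add_left _ (Multiset.card s))]
  gcongr with k
  exact hν.2.1 _ (hL.setOf_le_coverCount_mem hs (k + 1)) _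
    (hL.setOf_le_coverCount_mem ht (k + 1)) fun x hx => lt_of_lt_of_le hx (hst x)

lemma sum_map_eq_of_coverCount_eq (hL : IsLatt L) (hν : IsVal L ν) (hs : ∀ U ∈ s, U ∈ L)
    (ht : ∀ U ∈ t, U ∈ L) (hst : coverCount s = coverCount t) :
    (s.map ν).sum = (t.map ν).sum :=
  le_antisymm (sum_map_mono_of_coverCount_le hL hν hs ht hst.le)
    (sum_map_mono_of_coverCount_le hL hν ht hs hst.ge)

lemma sum_map_ne_top (hL : IsLatt L) (hν : IsVal L ν) (hb : ν Set.univ < ⊤)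
    (hs : ∀ U ∈ s, U ∈ L) : (s.map ν).sum ≠ ⊤ := by
  refine Multiset.sum_induction (· ≠ ⊤) _ (fun a b ha hb => ENNReal.add_ne_top.2 ⟨ha, hb⟩)
    ENNReal.zero_ne_top ?_
  simp only [Multiset.mem_map]
  rintro _ ⟨U, hU, rfl⟩
  exact (lt_of_le_of_lt (hν.2.1 U (hs U hU) _ hL.2.1 (Set.subset_univ U)) hb).ne

end LayerCake

section GenAlg

variable {L : Set (Set X)}

lemma subset_genAlg : L ⊆ genAlg L := fun _ hU _ hA => hA.1 hU

lemma isLatt_genAlg : IsLatt (genAlg L) := by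
  have hempty : (∅ : Set X) ∈ genAlg L := fun _ hA => hA.2.1
  have hcompl : ∀ C ∈ genAlg L, Cᶜ ∈ genAlg L := fun C hC A hA => hA.2.2.1 C (hC A hA)
  have hunion : ∀ C ∈ genAlg L, ∀ D ∈ genAlg L, C ∪ D ∈ genAlg L :=
    fun C hC D hD A hA => hA.2.2.2 C (hC A hA) D (hD A hA)
  refine ⟨hempty, by simpa using hcompl ∅ hempty, hunion, fun C hC D hD => ?_⟩
  simpa [Set.compl_union] using hcompl _ (hunion _ (hcompl C hC) _ (hcompl D hD))

end GenAlg

section Extension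

variable {L : Set (Set X)} {ν : Set X → ℝ≥0∞} {C D : Set X} {s t s' t' : Multiset (Set X)}

/-- `𝟙_C = #s - #t` for the families `s, t` of members of `L`, in subtraction-free form. -/
structure IsStepRep (L : Set (Set X)) (C : Set X) (s t : Multiset (Set X)) : Prop where
  mem_left : ∀ U ∈ s, U ∈ L
  mem_right : ∀ V ∈ t, V ∈ L
  indicator_add : C.indicator 1 + coverCount t = coverCount s

lemma isStepRep_of_mem {U : Set X} (hU : U ∈ L) : IsStepRep L U {U} 0 :=
  ⟨by simpa using hU, by simp, by simp [coverCount]⟩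

lemma isStepRep_empty : IsStepRep L ∅ 0 0 := ⟨by simp, by simp, by ext; simp⟩

lemma IsStepRep.compl (hL : IsLatt L) (h : IsStepRep L C s t) :
    IsStepRep L Cᶜ (Set.univ ::ₘ t) s := by
  refine ⟨?_, h.mem_left, ?_⟩
  · simpa [forall_eq_or_imp] using ⟨hL.2.1, h.mem_right⟩
  · rw [← h.indicator_add, ← add_assoc, Set.indicator_compl_add_self, coverCount_cons,
      Set.indicator_univ]

lemma IsStepRep.inter (hL : IsLatt L) (hC : IsStepRep L C s t) (hD : IsStepRep L D s' t') :
    IsStepRep L (C ∩ D) (interProd s s' + interProd t t') (interProd s t' + interProd t s') := by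
  refine ⟨?_, ?_, ?_⟩
  · simpa [or_imp, forall_and] using
      ⟨hL.interProd_mem hC.mem_left hD.mem_left, hL.interProd_mem hC.mem_right hD.mem_right⟩
  · simpa [or_imp, forall_and] using
      ⟨hL.interProd_mem hC.mem_left hD.mem_right, hL.interProd_mem hC.mem_right hD.mem_left⟩
  · simp only [coverCount_add, coverCount_interProd, ← hC.indicator_add, ← hD.indicator_add]
    ext x
    simp only [Pi.add_apply, Pi.mul_apply, Set.inter_indicator_one]
    ring

lemma exists_isStepRep (hL : IsLatt L) (hC : C ∈ genAlg L) : ∃ s t, IsStepRep L C s t := by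
  refine hC {C | ∃ s t, IsStepRep L C s t} ⟨fun U hU => ⟨_, _, isStepRep_of_mem hU⟩,
    ⟨_, _, isStepRep_empty⟩, fun C ⟨s, t, h⟩ => ⟨_, _, h.compl hL⟩, ?_⟩
  rintro C ⟨s, t, hC⟩ D ⟨s', t', hD⟩
  rw [← compl_compl (C ∪ D), Set.compl_union]
  exact ⟨_, _, ((hC.compl hL).inter hL (hD.compl hL)).compl hL⟩

open Classical in
noncomputable def extendVal (L : Set (Set X)) (ν : Set X → ℝ≥0∞) (C : Set X) : ℝ≥0∞ :=
  if h : ∃ p : Multiset (Set X) × Multiset (Set X), IsStepRep L C p.1 p.2 then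
    (h.choose.1.map ν).sum - (h.choose.2.map ν).sum
  else 0

lemma IsStepRep.extendVal_add (hL : IsLatt L) (hν : IsVal L ν) (hb : ν Set.univ < ⊤)
    (h : IsStepRep L C s t) : extendVal L ν C + (t.map ν).sum = (s.map ν).sum := by
  have hex : ∃ p : Multiset (Set X) × Multiset (Set X), IsStepRep L C p.1 p.2 := ⟨(s, t), h⟩
  obtain ⟨hs₀, ht₀, hC₀⟩ := hex.choose_spec
  set s₀ := hex.choose.1
  set t₀ := hex.choose.2
  have hcross : (s₀.map ν).sum + (t.map ν).sum = (s.map ν).sum + (t₀.map ν).sum := by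
    simpa using sum_map_eq_of_coverCount_eq hL hν (s := s₀ + t) (t := s + t₀)
      (by simpa [or_imp, forall_and] using ⟨hs₀, h.mem_right⟩)
      (by simpa [or_imp, forall_and] using ⟨h.mem_left, ht₀⟩)
      (by rw [coverCount_add, coverCount_add, ← hC₀, ← h.indicator_add]; ring)
  have hle : (t₀.map ν).sum ≤ (s₀.map ν).sum :=
    sum_map_mono_of_coverCount_le hL hν ht₀ hs₀ (hC₀ ▸ le_add_self)
  rw [extendVal, dif_pos hex]
  refine (ENNReal.add_left_inj (sum_map_ne_top hL hν hb ht₀)).1 ?_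
  rw [add_right_comm, tsub_add_cancel_of_le hle, hcross]

lemma extendVal_of_mem (hL : IsLatt L) (hν : IsVal L ν) (hb : ν Set.univ < ⊤) {U : Set X}
    (hU : U ∈ L) : extendVal L ν U = ν U := by
  simpa using (isStepRep_of_mem hU).extendVal_add hL hν hb

lemma extendVal_empty (hL : IsLatt L) (hν : IsVal L ν) (hb : ν Set.univ < ⊤) :
    extendVal L ν ∅ = 0 := by
  simpa using isStepRep_empty.extendVal_add hL hν hb

lemma extendVal_add_le (hL : IsLatt L) (hν : IsVal L ν) (hb : ν Set.univ < ⊤)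
    {C₁ C₂ D₁ D₂ : Set X} {s₁ t₁ s₂ t₂ s₃ t₃ s₄ t₄ : Multiset (Set X)}
    (h₁ : IsStepRep L C₁ s₁ t₁) (h₂ : IsStepRep L C₂ s₂ t₂)
    (h₃ : IsStepRep L D₁ s₃ t₃) (h₄ : IsStepRep L D₂ s₄ t₄)
    (h : C₁.indicator 1 + C₂.indicator (1 : X → ℕ) ≤ D₁.indicator 1 + D₂.indicator 1) :
    extendVal L ν C₁ + extendVal L ν C₂ ≤ extendVal L ν D₁ + extendVal L ν D₂ := by
  have hcount : coverCount (s₁ + s₂ + t₃ + t₄) ≤ coverCount (s₃ + s₄ + t₁ + t₂) := by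
    simp only [coverCount_add, ← h₁.indicator_add, ← h₂.indicator_add, ← h₃.indicator_add,
      ← h₄.indicator_add]
    intro x
    have := h x
    simp only [Pi.add_apply] at this ⊢
    omega
  have hsum := sum_map_mono_of_coverCount_le hL hν
    (by simpa [or_imp, forall_and] using ⟨⟨⟨h₁.1, h₂.1⟩, h₃.2⟩, h₄.2⟩)
    (by simpa [or_imp, forall_and] using ⟨⟨⟨h₃.1, h₄.1⟩, h₁.2⟩, h₂.2⟩) hcount
  simp only [Multiset.map_add, Multiset.sum_add, ← h₁.extendVal_add hL hν hb,
    ← h₂.extendVal_add hL hν hb, ← h₃.extendVal_add hL hν hb,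
    ← h₄.extendVal_add hL hν hb] at hsum
  have hfin : (t₁.map ν).sum + (t₂.map ν).sum + (t₃.map ν).sum + (t₄.map ν).sum ≠ ⊤ := by
    simp only [ne_eq, ENNReal.add_eq_top, not_or]
    exact ⟨⟨⟨sum_map_ne_top hL hν hb h₁.2, sum_map_ne_top hL hν hb h₂.2⟩,
      sum_map_ne_top hL hν hb h₃.2⟩, sum_map_ne_top hL hν hb h₄.2⟩
  refine (ENNReal.add_le_add_iff_right hfin).1 ?_
  convert hsum using 1 <;> ring

lemma isVal_extendVal (hL : IsLatt L) (hν : IsVal L ν) (hb : ν Set.univ < ⊤) :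
    IsVal (genAlg L) (extendVal L ν) := by
  refine ⟨extendVal_empty hL hν hb, fun C hC D hD hCD => ?_, fun C hC D hD => ?_⟩
  · obtain ⟨s, t, hC⟩ := exists_isStepRep hL hC
    obtain ⟨s', t', hD⟩ := exists_isStepRep hL hD
    have hind : C.indicator (1 : X → ℕ) ≤ D.indicator 1 :=
      Set.indicator_le_indicator_of_subset hCD fun _ => zero_le
    simpa [extendVal_empty hL hν hb] using
      extendVal_add_le hL hν hb hC isStepRep_empty hD isStepRep_empty (by simpa using hind)
  · obtain ⟨s₁, t₁, hunion⟩ := exists_isStepRep hL (isLatt_genAlg.2.2.1 C hC D hD)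
    obtain ⟨s₂, t₂, hinter⟩ := exists_isStepRep hL (isLatt_genAlg.2.2.2 C hC D hD)
    obtain ⟨s, t, hC⟩ := exists_isStepRep hL hC
    obtain ⟨s', t', hD⟩ := exists_isStepRep hL hD
    have hind := Set.indicator_union_add_inter (1 : X → ℕ) C D
    exact le_antisymm (extendVal_add_le hL hν hb hC hD hunion hinter hind.ge)
      (extendVal_add_le hL hν hb hunion hinter hC hD hind.le)

lemma IsVal.eq_extendVal {μ : Set X → ℝ≥0∞} (hμ : IsVal (genAlg L) μ) (hL : IsLatt L)
    (hν : IsVal L ν) (hb : ν Set.univ < ⊤) (hμν : ∀ U ∈ L, μ U = ν U) (hC : C ∈ genAlg L) :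
    μ C = extendVal L ν C := by
  obtain ⟨s, t, h⟩ := exists_isStepRep hL hC
  have hsum := sum_map_eq_of_coverCount_eq isLatt_genAlg hμ (s := C ::ₘ t) (t := s)
    (by simpa using ⟨hC, fun V hV => subset_genAlg (h.mem_right V hV)⟩)
    (fun U hU => subset_genAlg (h.mem_left U hU)) (by rw [coverCount_cons, h.indicator_add])
  have hμν_sum : ∀ r : Multiset (Set X), (∀ U ∈ r, U ∈ L) → (r.map μ).sum = (r.map ν).sum :=
    fun r hr => congrArg Multiset.sum (Multiset.map_congr rfl fun U hU => hμν U (hr U hU))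
  rw [Multiset.map_cons, Multiset.sum_cons, hμν_sum t h.mem_right, hμν_sum s h.mem_left,
    ← h.extendVal_add hL hν hb] at hsum
  exact (ENNReal.add_left_inj (sum_map_ne_top hL hν hb h.mem_right)).1 hsum

end Extension

/-- Smiley–Horn–Tarski: every bounded valuation on `(X, L)` extends to a
unique valuation on `(X, A(L))`. -/
theorem stmt16 (L : Set (Set X)) (hL : IsLatt L) (ν : Set X → ℝ≥0∞) (hν : IsVal L ν)
    (hb : ν Set.univ < ⊤) :
    (∃ ν' : Set X → ℝ≥0∞, (∀ U ∈ L, ν' U = ν U) ∧ IsVal (genAlg L) ν') ∧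
      ∀ ν₁ ν₂ : Set X → ℝ≥0∞,
        (∀ U ∈ L, ν₁ U = ν U) → IsVal (genAlg L) ν₁ →
        (∀ U ∈ L, ν₂ U = ν U) → IsVal (genAlg L) ν₂ →
        ∀ C ∈ genAlg L, ν₁ C = ν₂ C := by
  refine ⟨⟨extendVal L ν, fun U hU => extendVal_of_mem hL hν hb hU, isVal_extendVal hL hν hb⟩,
    fun ν₁ ν₂ h₁ hv₁ h₂ hv₂ C hC => ?_⟩
  rw [hv₁.eq_extendVal hL hν hb h₁ hC, hv₂.eq_extendVal hL hν hb h₂ hC]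
end
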